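/- Weak Number Avoidance Theorem: Let G be a game that is not equivalent to any number, and let x be a number. Then x ⧏ G if and only if there exists a left option G^L of G with x ≤ G^L. -/

import Mathlib

universe u

namespace SetTheory

/-- Pre-games (removed from Mathlib; restored with the old definition). -/
inductive PGame : Type (u + 1)
  | mk : ∀ α β : Type u, (α → PGame) → (β → PGame) → PGame

namespace PGame

/-- The type of left moves. -/
def LeftMoves : PGame.{u} → Type u
  | mk l _ _ _ => l

/-- The type of right moves. -/
def RightMoves : PGame.{u} → Type u
  | mk _ r _ _ => r

/-- The left options. -/
def moveLeft : ∀ g : PGame.{u}, LeftMoves g → PGame.{u}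
  | mk _ _ L _ => L

/-- The right options. -/
def moveRight : ∀ g : PGame.{u}, RightMoves g → PGame.{u}
  | mk _ _ _ R => R

/-- Simultaneous recursive definition of `x ≤ y` (first component) and `x ⧏ y` (second). -/
noncomputable def leLF (x : PGame.{u}) : PGame.{u} → Prop × Prop :=
  PGame.rec (motive := fun _ => PGame.{u} → Prop × Prop)
    (fun _ _ _ _ ihxL ihxR y =>
      PGame.rec (motive := fun _ => Prop × Prop)
        (fun yl yr yL yR ihyL ihyR =>
          ((∀ i, (ihxL i (mk yl yr yL yR)).2) ∧ ∀ j, (ihyR j).2,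
           (∃ i, (ihyL i).1) ∨ ∃ j, (ihxR j (mk yl yr yL yR)).1))
        y) x

noncomputable instance : LE PGame.{u} := ⟨fun x y => (leLF x y).1⟩

/-- `x ⧏ y` means `¬ y ≤ x`. -/
def LF (x y : PGame.{u}) : Prop := ¬y ≤ x

infixl:50 " ⧏ " => PGame.LF

noncomputable instance : LT PGame.{u} := ⟨fun x y => x ≤ y ∧ ¬y ≤ x⟩

/-- Equivalence of pre-games. -/
def Equiv (x y : PGame.{u}) : Prop := x ≤ y ∧ y ≤ x

instance : HasEquiv PGame.{u} := ⟨Equiv⟩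

/-- A pre-game is numeric if its options are numeric and every left option is less than
every right option. -/
def Numeric : PGame.{u} → Prop
  | ⟨_, _, L, R⟩ => (∀ i j, L i < R j) ∧ (∀ i, Numeric (L i)) ∧ ∀ j, Numeric (R j)

end PGame

end SetTheory

/-!
Induct on `x`. A proof of `x ⧏ G` is either a left option `G^L ≥ x`, and we are done, or a right
option `x^R ≤ G`. In the second case `x^R` is a number, so it is not equivalent to `G`; hence
`x^R ⧏ G`, the induction hypothesis gives `x^R ≤ G^L`, and `x ≤ x^R` because `x` is a number.
-/

namespace SetTheory.PGame

theorem leLF_mk (xl xr : Type u) (xL : xl → PGame.{u}) (xR : xr → PGame.{u})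
    (yl yr : Type u) (yL : yl → PGame.{u}) (yR : yr → PGame.{u}) :
    leLF (mk xl xr xL xR) (mk yl yr yL yR) =
      ((∀ i, (leLF (xL i) (mk yl yr yL yR)).2) ∧ ∀ j, (leLF (mk xl xr xL xR) (yR j)).2,
       (∃ i, (leLF (mk xl xr xL xR) (yL i)).1) ∨ ∃ j, (leLF (xR j) (mk yl yr yL yR)).1) :=
  rfl

-- Both orders are proved together: the case `(x, y)` needs the induction hypothesis at
-- `(y^L, x)` and `(y, x^R)`, with the arguments swapped.
theorem leLF_snd_iff_not_fst (x y : PGame.{u}) :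
    ((leLF x y).2 ↔ ¬(leLF y x).1) ∧ ((leLF y x).2 ↔ ¬(leLF x y).1) := by
  induction x generalizing y with
  | mk xl xr xL xR ihxL ihxR =>
  induction y with
  | mk yl yr yL yR ihyL ihyR =>
  have hyL : ∀ i, (leLF (yL i) (mk xl xr xL xR)).2 ↔ ¬(leLF (mk xl xr xL xR) (yL i)).1 :=
    fun i => (ihyL i).2
  have hxR : ∀ j, (leLF (mk yl yr yL yR) (xR j)).2 ↔ ¬(leLF (xR j) (mk yl yr yL yR)).1 :=
    fun j => (ihxR j _).2
  have hxL : ∀ i, (leLF (xL i) (mk yl yr yL yR)).2 ↔ ¬(leLF (mk yl yr yL yR) (xL i)).1 :=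
    fun i => (ihxL i _).1
  have hyR : ∀ j, (leLF (mk xl xr xL xR) (yR j)).2 ↔ ¬(leLF (yR j) (mk xl xr xL xR)).1 :=
    fun j => (ihyR j).1
  simp only [leLF_mk, hyL, hxR, hxL, hyR, not_and_or, not_forall, not_not, and_self]

theorem le_iff_forall_lf {x y : PGame.{u}} :
    x ≤ y ↔ (∀ i, x.moveLeft i ⧏ y) ∧ ∀ j, x ⧏ y.moveRight j := by
  cases x with | mk xl xr xL xR =>
  cases y with | mk yl yr yL yR =>
  change (leLF (mk xl xr xL xR) (mk yl yr yL yR)).1 ↔ _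
  rw [leLF_mk]
  exact and_congr (forall_congr' fun _ => (leLF_snd_iff_not_fst _ _).1)
    (forall_congr' fun _ => (leLF_snd_iff_not_fst _ _).1)

theorem lf_iff_exists_le {x y : PGame.{u}} :
    x ⧏ y ↔ (∃ i, x ≤ y.moveLeft i) ∨ ∃ j, x.moveRight j ≤ y := by
  cases x with | mk xl xr xL xR =>
  cases y with | mk yl yr yL yR =>
  change ¬(leLF (mk yl yr yL yR) (mk xl xr xL xR)).1 ↔ _
  rw [← (leLF_snd_iff_not_fst (mk xl xr xL xR) (mk yl yr yL yR)).1, leLF_mk]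
  rfl

-- The three rotations of transitivity are proved together, so that each one finds the
-- induction hypothesis it needs among the others.
theorem le_trans_rotations (x y z : PGame.{u}) :
    (x ≤ y → y ≤ z → x ≤ z) ∧ (y ≤ z → z ≤ x → y ≤ x) ∧ (z ≤ x → x ≤ y → z ≤ y) := by
  induction x generalizing y z with
  | mk xl xr xL xR ihxL ihxR =>
  induction y generalizing z with
  | mk yl yr yL yR ihyL ihyR =>
  induction z with
  | mk zl zr zL zR ihzL ihzR =>
  refine ⟨fun h₁ h₂ => ?_, fun h₁ h₂ => ?_, fun h₁ h₂ => ?_⟩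
  · exact le_iff_forall_lf.2 ⟨fun i hz => (le_iff_forall_lf.1 h₁).1 i ((ihxL i _ _).2.1 h₂ hz),
      fun k hx => (le_iff_forall_lf.1 h₂).2 k ((ihzR k).2.2 hx h₁)⟩
  · exact le_iff_forall_lf.2 ⟨fun i hx => (le_iff_forall_lf.1 h₁).1 i ((ihyL i _).2.2 h₂ hx),
      fun k hk => (le_iff_forall_lf.1 h₂).2 k ((ihxR k _ _).1 hk h₁)⟩
  · exact le_iff_forall_lf.2 ⟨fun i hy => (le_iff_forall_lf.1 h₁).1 i ((ihzL i).1 h₂ hy),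
      fun k hk => (le_iff_forall_lf.1 h₂).2 k ((ihyR k _).2.1 hk h₁)⟩

noncomputable instance : Preorder PGame.{u} where
  le_refl x := by
    induction x with
    | mk xl xr xL xR ihL ihR =>
      exact le_iff_forall_lf.2 ⟨fun i => lf_iff_exists_le.2 (.inl ⟨i, ihL i⟩),
        fun j => lf_iff_exists_le.2 (.inr ⟨j, ihR j⟩)⟩
  le_trans x y z := (le_trans_rotations x y z).1
  lt_iff_le_not_ge _ _ := Iff.rfl

theorem moveLeft_lf {x : PGame.{u}} (i : x.LeftMoves) : x.moveLeft i ⧏ x :=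
  lf_iff_exists_le.2 (.inl ⟨i, le_rfl⟩)

theorem lf_moveRight {x : PGame.{u}} (j : x.RightMoves) : x ⧏ x.moveRight j :=
  lf_iff_exists_le.2 (.inr ⟨j, le_rfl⟩)

theorem lf_of_le_of_lf {x y z : PGame.{u}} (h₁ : x ≤ y) (h₂ : y ⧏ z) : x ⧏ z :=
  fun hzx => h₂ (hzx.trans h₁)

theorem lf_of_lf_of_le {x y z : PGame.{u}} (h₁ : x ⧏ y) (h₂ : y ≤ z) : x ⧏ z :=
  fun hzx => h₁ (h₂.trans hzx)

theorem Numeric.moveRight {x : PGame.{u}} (hx : x.Numeric) (j : x.RightMoves) :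
    (x.moveRight j).Numeric := by
  cases x
  exact hx.2.2 j

theorem Numeric.le_moveRight {x : PGame.{u}} (hx : x.Numeric) (j : x.RightMoves) :
    x ≤ x.moveRight j := by
  induction x with
  | mk xl xr xL xR _ ihR =>
  obtain ⟨hlt, -, hR⟩ := hx
  exact le_iff_forall_lf.2 ⟨fun i => (hlt i j).2,
    fun k => lf_of_lf_of_le (lf_moveRight j) (ihR j (hR j) k)⟩

theorem exists_le_moveLeft_of_numeric_lf {G : PGame.{u}}
    (hG : ∀ y : PGame.{u}, y.Numeric → ¬ G ≈ y) {x : PGame.{u}} (hx : x.Numeric) (h : x ⧏ G) :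
    ∃ i, x ≤ G.moveLeft i := by
  induction x with
  | mk xl xr xL xR _ ihR =>
  rcases lf_iff_exists_le.1 h with hL | ⟨j, hRG⟩
  · exact hL
  · have hxR : (xR j).Numeric := hx.moveRight j
    have hRlf : xR j ⧏ G := fun hGR => hG _ hxR ⟨hGR, hRG⟩
    obtain ⟨i, hi⟩ := ihR j hxR hRlf
    exact ⟨i, (hx.le_moveRight j).trans hi⟩

end SetTheory.PGame

open SetTheory PGame

/-- Weak Number Avoidance Theorem: if the game `G` is not equivalent to any
number and `x` is a number, then `x ⧏ G` iff `x ≤ G^L` for some left option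
`G^L` of `G`. -/
theorem weak_number_avoidance (G x : PGame) (hx : x.Numeric)
    (hG : ∀ y : PGame, y.Numeric → ¬ (G ≈ y)) :
    x ⧏ G ↔ ∃ i : G.LeftMoves, x ≤ G.moveLeft i := by
  refine ⟨exists_le_moveLeft_of_numeric_lf hG hx, ?_⟩
  rintro ⟨i, hi⟩
  exact lf_of_le_of_lf hi (moveLeft_lf i)
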